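/- With notation as above (∇e₁ = 0, ∇e₂ = e₁, M free over L[[t]] on e₁, e₂), an element x = A·e₁ + B·e₂ with A, B ∈ L[[t]] satisfies ∇_{2k}(x) ∈ t^{2k}·M if and only if B ∈ t^{2k}·L[[t]]. Equivalently, writing B = ∑ α_s t^s, the image of ∑_{j=0}^{2k−1} (∇_{2k}/(∇−j))(B) in L[[t]]/t^{2k} equals ∑_{s=0}^{2k−1} (−1)^{2k−1−s} s!(2k−s−1)! α_s t^s. -/

import Mathlib

/-!
Since `∇` multiplies the coefficient of `t ^ n` by `n`, every product of factors `∇ - i` acts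
diagonally on `L[[t]]`, and `∇_{2k}` kills the coefficients of index `< 2k`. In the basis
`e₁, e₂` the operator `∇ - i` acts by `(A, B) ↦ ((∇ - i) A + B, (∇ - i) B)`, so by induction
`∇_{2k} (A e₁ + B e₂) = (∇_{2k} A + ∑ⱼ (∇_{2k}/(∇ - j)) B) e₁ + (∇_{2k} B) e₂`.
Modulo `t ^ {2k}` only the sum survives, and on `t ^ s` with `s < 2k` it is multiplication by
`∏_{i ≠ s} (s - i) = (-1) ^ (2k - 1 - s) s! (2k - 1 - s)!`, which is nonzero in characteristic `0`.
-/

open PowerSeries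

/-- The operator `∇ = t·d/dt` on `L[[t]]`, as an additive endomorphism. -/
noncomputable def nablaE (L : Type*) [Field L] : AddMonoid.End (PowerSeries L) :=
  AddMonoidHom.mk' (fun f => PowerSeries.mk fun n => (n : L) * PowerSeries.coeff n f)
    (by intro f g; ext n; simp [mul_add])

open Nat

-- `Π[D, l]` is `∏_{i ∈ l} (D - i)`, so `∇_{2k} = Π[∇, range (2k)]` and
-- `∇_{2k}/(∇ - j) = Π[∇, (range (2k)).filter (· ≠ j)]`.
local notation "Π[" D ", " l "]" => (List.prod (List.map (fun i : ℕ => D - (i : AddMonoid.End _)) l) : AddMonoid.End _)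

lemma AddMonoid.End.sub_apply {G : Type*} [AddCommGroup G] (f g : AddMonoid.End G) (x : G) :
    (f - g) x = f x - g x :=
  rfl

lemma filter_range_succ_ne_self (m : ℕ) : (List.range (m + 1)).filter (· ≠ m) = List.range m := by
  rw [List.range_succ, List.filter_append, List.filter_eq_self.mpr
    (fun i hi => by simpa using (List.mem_range.mp hi).ne)]
  simp

lemma filter_range_succ_ne {j m : ℕ} (h : j ≠ m) :
    (List.range (m + 1)).filter (· ≠ j) = (List.range m).filter (· ≠ j) ++ [m] := by
  simp [List.range_succ, List.filter_append, Ne.symm h]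

lemma prod_filter_range_ne_sub {R : Type*} [CommRing R] {n m : ℕ} (h : n < m) :
    (((List.range m).filter (· ≠ n)).map fun i : ℕ => (n : R) - i).prod
      = (-1) ^ (m - 1 - n) * (n ! : R) * ((m - 1 - n)! : R) := by
  induction m, h using Nat.le_induction with
  | base =>
    rw [filter_range_succ_ne_self]
    change ∏ i ∈ Finset.range n, ((n : R) - i) = _
    rw [← descPochhammer_eval_eq_prod_range, descPochhammer_eval_eq_descFactorial,
      Nat.descFactorial_self]
    simp
  | succ m hnm ih =>
    have hcast : ((m - 1 - n + 1 : ℕ) : R) = m - n := by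
      rw [show m - 1 - n + 1 = m - n by omega, Nat.cast_sub (by omega)]
    rw [filter_range_succ_ne (by omega), List.map_append, List.prod_append, ih,
      show m + 1 - 1 - n = m - 1 - n + 1 by omega, Nat.factorial_succ, Nat.cast_mul, hcast]
    simp only [List.map_cons, List.map_nil, List.prod_singleton]
    ring

section PowerSeries

variable {L : Type*} [Field L]

lemma coeff_nablaE_apply (n : ℕ) (f : L⟦X⟧) : coeff n (nablaE L f) = n * coeff n f :=
  coeff_mk n fun n => (n : L) * coeff n f

lemma coeff_nablaE_sub_natCast_apply (n i : ℕ) (f : L⟦X⟧) :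
    coeff n ((nablaE L - (i : AddMonoid.End L⟦X⟧)) f) = ((n : L) - i) * coeff n f := by
  rw [AddMonoid.End.sub_apply, map_sub, coeff_nablaE_apply, AddMonoid.End.natCast_apply, map_nsmul,
    nsmul_eq_mul, sub_mul]

lemma coeff_prod_nablaE_sub_apply (l : List ℕ) (n : ℕ) (f : L⟦X⟧) :
    coeff n (Π[nablaE L, l] f) = (l.map fun i : ℕ => (n : L) - i).prod * coeff n f := by
  induction l with
  | nil => simp
  | cons a l ih =>
    simp only [List.map_cons, List.prod_cons, AddMonoid.End.coe_mul, Function.comp_apply,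
      coeff_nablaE_sub_natCast_apply, ih]
    ring

lemma X_pow_dvd_prod_range_nablaE_sub_apply (m : ℕ) (f : L⟦X⟧) :
    X ^ m ∣ Π[nablaE L, List.range m] f := by
  refine X_pow_dvd_iff.mpr fun n hn => ?_
  rw [coeff_prod_nablaE_sub_apply,
    List.prod_eq_zero (List.mem_map.mpr ⟨n, List.mem_range.mpr hn, sub_self _⟩), zero_mul]

lemma coeff_sum_prod_filter_range_ne_nablaE_sub_apply {n m : ℕ} (hn : n < m) (f : L⟦X⟧) :
    coeff n (∑ j ∈ Finset.range m, Π[nablaE L, (List.range m).filter (· ≠ j)] f)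
      = (-1) ^ (m - 1 - n) * (n ! : L) * ((m - 1 - n)! : L) * coeff n f := by
  rw [map_sum, Finset.sum_eq_single_of_mem n (Finset.mem_range.mpr hn),
    coeff_prod_nablaE_sub_apply, prod_filter_range_ne_sub hn]
  intro j _ hj
  rw [coeff_prod_nablaE_sub_apply, List.prod_eq_zero, zero_mul]
  exact List.mem_map.mpr ⟨n, by simpa [hn] using hj.symm, sub_self _⟩

lemma X_pow_dvd_sum_prod_filter_range_ne_nablaE_sub_apply_iff [CharZero L] (m : ℕ) (f : L⟦X⟧) :
    X ^ m ∣ ∑ j ∈ Finset.range m, Π[nablaE L, (List.range m).filter (· ≠ j)] f ↔ X ^ m ∣ f := by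
  simp only [X_pow_dvd_iff]
  refine forall₂_congr fun n hn => ?_
  rw [coeff_sum_prod_filter_range_ne_nablaE_sub_apply hn, mul_eq_zero_iff_left]
  simp [Nat.factorial_ne_zero]

end PowerSeries

section Module

variable {R M : Type*} [CommRing R] [AddCommGroup M] [Module R M]

lemma prod_range_sub_natCast_apply_smul_add_smul (δ : AddMonoid.End R) (N : AddMonoid.End M)
    (hleib : ∀ (f : R) (x : M), N (f • x) = δ f • x + f • N x) {e₀ e₁ : M}
    (he₀ : N e₀ = 0) (he₁ : N e₁ = e₀) (m : ℕ) (A B : R) :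
    Π[N, List.range m] (A • e₀ + B • e₁)
      = (Π[δ, List.range m] A + ∑ j ∈ Finset.range m, Π[δ, (List.range m).filter (· ≠ j)] B) • e₀
        + Π[δ, List.range m] B • e₁ := by
  induction m generalizing A B with
  | zero => simp
  | succ m ih =>
    have step : (N - m) (A • e₀ + B • e₁)
        = ((δ - (m : AddMonoid.End R)) A + B) • e₀ + (δ - (m : AddMonoid.End R)) B • e₁ := by
      simp only [AddMonoid.End.sub_apply, AddMonoid.End.natCast_apply, map_add, hleib, he₀, he₁]
      module
    have filter_succ : ∀ j ∈ Finset.range m,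
        Π[δ, (List.range (m + 1)).filter (· ≠ j)] B
          = Π[δ, (List.range m).filter (· ≠ j)] ((δ - (m : AddMonoid.End R)) B) :=
      fun j hj => by
        rw [filter_range_succ_ne (Finset.mem_range.mp hj).ne, List.map_append, List.prod_append]
        simp
    rw [List.prod_range_succ, AddMonoid.End.coe_mul, Function.comp_apply, step, ih,
      Finset.sum_range_succ, filter_range_succ_ne_self, Finset.sum_congr rfl filter_succ,
      List.prod_range_succ]
    simp only [AddMonoid.End.coe_mul, Function.comp_apply, map_add]
    module

lemma Module.Basis.exists_smul_add_smul_eq_smul_iff (b : Module.Basis (Fin 2) R M) (r u v : R) :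
    (∃ x : M, u • b 0 + v • b 1 = r • x) ↔ r ∣ u ∧ r ∣ v := by
  constructor
  · rintro ⟨x, hx⟩
    have hrepr := congrArg b.repr hx
    exact ⟨⟨b.repr x 0, by simpa using congr($hrepr 0)⟩,
      ⟨b.repr x 1, by simpa using congr($hrepr 1)⟩⟩
  · rintro ⟨⟨u, rfl⟩, ⟨v, rfl⟩⟩
    exact ⟨u • b 0 + v • b 1, by module⟩

end Module

theorem stmt9_general {L : Type*} [Field L] [CharZero L]
    {M : Type*} [AddCommGroup M] [Module (PowerSeries L) M]
    (b : Module.Basis (Fin 2) (PowerSeries L) M)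
    (N : AddMonoid.End M)
    (hleib : ∀ (f : PowerSeries L) (m : M), N (f • m) = (nablaE L f) • m + f • N m)
    (he₁ : N (b 0) = 0) (he₂ : N (b 1) = b 0)
    (k : ℕ) (A B : PowerSeries L) :
    ((∃ m : M,
        (((List.range (2 * k)).map fun (i : ℕ) => N - (i : AddMonoid.End M)).prod)
          (A • b 0 + B • b 1) = (PowerSeries.X : PowerSeries L) ^ (2 * k) • m) ↔
      ∃ B' : PowerSeries L, B = PowerSeries.X ^ (2 * k) * B') ∧
    ∃ Cq : PowerSeries L,
      (∑ j ∈ Finset.range (2 * k),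
          ((((List.range (2 * k)).filter (fun i => i ≠ j)).map
            fun (i : ℕ) => nablaE L - (i : AddMonoid.End (PowerSeries L))).prod) B) -
        (∑ s ∈ Finset.range (2 * k),
          ((-1 : L) ^ (2 * k - 1 - s) * (Nat.factorial s : L) *
            (Nat.factorial (2 * k - 1 - s) : L) * PowerSeries.coeff s B) •
            (PowerSeries.X : PowerSeries L) ^ s) =
      PowerSeries.X ^ (2 * k) * Cq := by
  constructor
  · rw [prod_range_sub_natCast_apply_smul_add_smul (nablaE L) N hleib he₁ he₂,
      b.exists_smul_add_smul_eq_smul_iff,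
      dvd_add_right (X_pow_dvd_prod_range_nablaE_sub_apply _ A),
      X_pow_dvd_sum_prod_filter_range_ne_nablaE_sub_apply_iff,
      and_iff_left (X_pow_dvd_prod_range_nablaE_sub_apply _ B)]
    rfl
  · refine X_pow_dvd_iff.mpr fun n hn => ?_
    rw [map_sub, coeff_sum_prod_filter_range_ne_nablaE_sub_apply hn]
    simp [coeff_X_pow, hn]

/-- Let `M` be free over `L[[t]]` on `e₁, e₂` with `∇` satisfying the Leibniz rule over
`t d/dt`, `∇e₁ = 0`, `∇e₂ = e₁`, and `∇_{2k} = ∇(∇−1)⋯(∇−2k+1)`. Then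
`x = A·e₁ + B·e₂` satisfies `∇_{2k}(x) ∈ t^{2k}·M` iff `B ∈ t^{2k}·L[[t]]`;
equivalently the image of `∑_{j<2k} (∇_{2k}/(∇−j))(B)` in `L[[t]]/t^{2k}` equals
`∑_{s<2k} (−1)^{2k−1−s} s!(2k−s−1)! α_s t^s`, where `B = ∑ α_s t^s`. -/
theorem stmt9 {L : Type*} [Field L] [CharZero L]
    {M : Type*} [AddCommGroup M] [Module (PowerSeries L) M]
    (b : Module.Basis (Fin 2) (PowerSeries L) M)
    (N : AddMonoid.End M)
    (hleib : ∀ (f : PowerSeries L) (m : M), N (f • m) = (nablaE L f) • m + f • N m)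
    (he₁ : N (b 0) = 0) (he₂ : N (b 1) = b 0)
    (k : ℕ) (hk : 1 ≤ k) (A B : PowerSeries L) :
    ((∃ m : M,
        (((List.range (2 * k)).map fun (i : ℕ) => N - (i : AddMonoid.End M)).prod)
          (A • b 0 + B • b 1) = (PowerSeries.X : PowerSeries L) ^ (2 * k) • m) ↔
      ∃ B' : PowerSeries L, B = PowerSeries.X ^ (2 * k) * B') ∧
    ∃ Cq : PowerSeries L,
      (∑ j ∈ Finset.range (2 * k),
          ((((List.range (2 * k)).filter (fun i => i ≠ j)).map
            fun (i : ℕ) => nablaE L - (i : AddMonoid.End (PowerSeries L))).prod) B) -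
        (∑ s ∈ Finset.range (2 * k),
          ((-1 : L) ^ (2 * k - 1 - s) * (Nat.factorial s : L) *
            (Nat.factorial (2 * k - 1 - s) : L) * PowerSeries.coeff s B) •
            (PowerSeries.X : PowerSeries L) ^ s) =
      PowerSeries.X ^ (2 * k) * Cq :=
  stmt9_general b N hleib he₁ he₂ k A B
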